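/- Let p ≥ 1 and n = 2p + 1, with qubits indexed by Fin n and center c = p (zero-based). Define the 2^n × 2^n complex matrix V = (∏_{j ≠ c} exp(−i(π/4)·X_j)) · (∏_{j=1}^{p} exp(−i(π/4)·Z_c Z_{c−j}) · exp(−i(π/4)·Z_c Z_{c+j})), where the product of the two-qubit Z-rotations is applied first. Then there exists a complex number ω with |ω| = 1 such that V|+^n⟩ = ω · (1/√2)(|0^n⟩ + |1^n⟩). -/

import Mathlib

open Matrix

/-- The single-qubit Pauli-X operator on qubit `j`: the permutation matrix flipping bit `j`. -/
noncomputable def XopF {n : ℕ} (j : Fin n) : Matrix (Fin n → Bool) (Fin n → Bool) ℂ :=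
  Matrix.of (fun x y => if y = Function.update x j (! x j) then 1 else 0)

/-- The two-qubit operator `Z_a Z_b`: diagonal with entry `(-1)^{x_a + x_b}`. -/
noncomputable def ZZopF {n : ℕ} (a b : Fin n) : Matrix (Fin n → Bool) (Fin n → Bool) ℂ :=
  Matrix.diagonal (fun x => if x a = x b then 1 else -1)

/-- The state `|+^n⟩`: all entries equal to `2^{-n/2}`. -/
noncomputable def plusF (n : ℕ) : (Fin n → Bool) → ℂ :=
  fun _ => ((1 / Real.sqrt (2 ^ n) : ℝ) : ℂ)

/-- The `n`-qubit GHZ state `(1/√2)(|0^n⟩ + |1^n⟩)`. -/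
noncomputable def ghzF (n : ℕ) : (Fin n → Bool) → ℂ :=
  fun x => if x = (fun _ => false) ∨ x = (fun _ => true) then ((1 / Real.sqrt 2 : ℝ) : ℂ) else 0

/-- The scalar `-i·π/4`. -/
noncomputable def rotAngle : ℂ := -(Complex.I * ((Real.pi / 4 : ℝ) : ℂ))

/-!
Conditioned on the central bit `x_c`, the `Z_c Z_j` layer turns `|+^n⟩` into a product over
`j ≠ c` of the phases `exp (±t)`, the sign recording whether `x_j` agrees with `x_c`. Each
`exp (t X_j)` touches only the `j`-th factor and replaces it by `1 + sinh 2t` (agreement) or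
`cosh 2t` (disagreement). At `t = -iπ/4` these are `1 - i` and `0`, so only the two constant
strings survive, each with amplitude `(1 - i)^(n-1) / √(2^n)`, i.e. `((1 - i)/√2)^(n-1) / √2`.
-/

open NormedSpace

theorem exp_smul_of_mul_self_eq_one {𝔸 : Type*} [Ring 𝔸] [Algebra ℂ 𝔸] [TopologicalSpace 𝔸]
    [IsTopologicalRing 𝔸] [ContinuousSMul ℂ 𝔸] [T2Space 𝔸] {A : 𝔸} (hA : A * A = 1) (t : ℂ) :
    exp (t • A) = Complex.cosh t • 1 + Complex.sinh t • A := by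
  have hpow : ∀ k, A ^ (2 * k) = 1 := fun k => by rw [pow_mul, sq, hA, one_pow]
  rw [exp_eq_tsum ℂ]
  refine HasSum.tsum_eq (HasSum.even_add_odd ?_ ?_)
  · convert (Complex.hasSum_cosh t).smul_const (1 : 𝔸) using 2 with k
    rw [smul_pow, smul_smul, hpow, div_eq_inv_mul]
  · convert (Complex.hasSum_sinh t).smul_const A using 2 with k
    rw [smul_pow, smul_smul, pow_succ A, hpow, one_mul, div_eq_inv_mul]

theorem prod_mul_eq_prod_erase_center {M : Type*} [CommMonoid M] {p : ℕ}
    (c : Fin (2 * p + 1)) (hc : (c : ℕ) = p) (f : Fin (2 * p + 1) → M) :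
    ∏ i : Fin p, f ⟨p - (i + 1), by omega⟩ * f ⟨p + (i + 1), by omega⟩ =
      ∏ j ∈ Finset.univ.erase c, f j := by
  let leg : Fin p ⊕ Fin p → Fin (2 * p + 1) :=
    Sum.elim (fun i => ⟨p - (i + 1), by omega⟩) (fun i => ⟨p + (i + 1), by omega⟩)
  rw [Finset.prod_mul_distrib]
  refine (Fintype.prod_sum_type fun s => f (leg s)).symm.trans ?_
  refine Finset.prod_nbij leg (fun s _ => ?_) (fun s _ s' _ h => ?_) (fun j hj => ?_)
    fun _ _ => rfl
  · rcases s with i | i <;> simp [leg, Fin.ext_iff] <;> omega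
  · rcases s with i | i <;> rcases s' with i' | i' <;>
      simp [leg, Fin.ext_iff] at h ⊢ <;> omega
  · have hjc : (j : ℕ) ≠ p := fun h => (Finset.mem_erase.mp hj).1 (Fin.ext (h.trans hc.symm))
    rcases lt_or_gt_of_ne hjc with hlt | hgt
    · exact ⟨Sum.inl ⟨p - 1 - j, by omega⟩, Finset.mem_coe.mpr (Finset.mem_univ _),
        Fin.ext (by simp [leg]; omega)⟩
    · exact ⟨Sum.inr ⟨j - p - 1, by omega⟩, Finset.mem_coe.mpr (Finset.mem_univ _),
        Fin.ext (by simp [leg]; omega)⟩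

theorem norm_one_sub_I_div_sqrt_two : ‖(1 - Complex.I) / (Real.sqrt 2 : ℂ)‖ = 1 := by
  rw [norm_div, Complex.norm_real, Real.norm_of_nonneg (Real.sqrt_nonneg 2), Complex.norm_def,
    Complex.normSq_apply]
  norm_num

theorem sqrt_two_pow (n : ℕ) : Real.sqrt (2 ^ n) = Real.sqrt 2 ^ n := by
  rw [← Real.sqrt_sq (pow_nonneg (Real.sqrt_nonneg 2) n), ← pow_mul, mul_comm, pow_mul,
    Real.sq_sqrt zero_le_two]

theorem two_mul_rotAngle : 2 * rotAngle = ((-(Real.pi / 2) : ℝ) : ℂ) * Complex.I := by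
  rw [rotAngle]
  push_cast
  ring

section Qubits

variable {n : ℕ}

theorem XopF_mulVec (j : Fin n) (v : (Fin n → Bool) → ℂ) :
    XopF j *ᵥ v = fun x => v (Function.update x j (!x j)) := by
  funext x
  simp [mulVec, dotProduct, XopF]

theorem XopF_mul_self (j : Fin n) : XopF j * XopF j = 1 := by
  refine Matrix.ext_of_mulVec_single fun y => ?_
  rw [← mulVec_mulVec, XopF_mulVec, XopF_mulVec, one_mulVec]
  simp

theorem ZZopF_mul_self (a b : Fin n) : ZZopF a b * ZZopF a b = 1 := by
  rw [ZZopF, diagonal_mul_diagonal, ← diagonal_one]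
  congr 1
  funext x
  split_ifs <;> norm_num

noncomputable def zzPhase (t : ℂ) (a b : Fin n) (x : Fin n → Bool) : ℂ :=
  Complex.exp (if x a = x b then t else -t)

theorem exp_smul_ZZopF (t : ℂ) (a b : Fin n) :
    exp (t • ZZopF a b) = diagonal (zzPhase t a b) := by
  rw [exp_smul_of_mul_self_eq_one (ZZopF_mul_self a b), ZZopF, ← diagonal_one, ← diagonal_smul,
    ← diagonal_smul, diagonal_add]
  congr 1
  funext x
  simp only [Pi.smul_apply, smul_eq_mul, zzPhase]
  split_ifs
  · rw [mul_one, mul_one, Complex.cosh_add_sinh]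
  · rw [mul_one, mul_neg_one, ← sub_eq_add_neg, Complex.cosh_sub_sinh]

theorem exp_smul_XopF_mulVec (t : ℂ) (j : Fin n) (v : (Fin n → Bool) → ℂ) :
    exp (t • XopF j) *ᵥ v =
      fun x => Complex.cosh t * v x + Complex.sinh t * v (Function.update x j (!x j)) := by
  rw [exp_smul_of_mul_self_eq_one (XopF_mul_self j), add_mulVec, smul_mulVec, smul_mulVec,
    one_mulVec, XopF_mulVec]
  rfl

noncomputable def copyAmp (t : ℂ) (a b : Fin n) (x : Fin n → Bool) : ℂ :=
  if x a = x b then 1 + Complex.sinh (2 * t) else Complex.cosh (2 * t)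

theorem exp_smul_XopF_mulVec_zzPhase_mul {c j : Fin n} (hjc : j ≠ c) (t : ℂ)
    {R : (Fin n → Bool) → ℂ} (hR : ∀ x b, R (Function.update x j b) = R x) :
    exp (t • XopF j) *ᵥ (fun x => zzPhase t c j x * R x) = fun x => copyAmp t c j x * R x := by
  have hsame : Complex.cosh t * Complex.exp t + Complex.sinh t * Complex.exp (-t) =
      1 + Complex.sinh (2 * t) := by
    rw [← Complex.cosh_add_sinh, ← Complex.cosh_sub_sinh, Complex.sinh_two_mul]
    linear_combination Complex.cosh_sq t
  have hdiff : Complex.cosh t * Complex.exp (-t) + Complex.sinh t * Complex.exp t =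
      Complex.cosh (2 * t) := by
    rw [← Complex.cosh_sub_sinh, ← Complex.cosh_add_sinh, Complex.cosh_two_mul]
    ring
  rw [exp_smul_XopF_mulVec]
  funext x
  simp only [zzPhase, copyAmp, hR, Function.update_of_ne hjc.symm, Function.update_self]
  cases x c <;> cases x j <;> simp only [Bool.not_true, Bool.not_false, if_true, if_false,
    reduceCtorEq] <;>
    first | linear_combination R x * hsame | linear_combination R x * hdiff

theorem zzPhase_update_of_ne {c j k : Fin n} (hkc : k ≠ c) (hkj : k ≠ j) (t : ℂ)
    (x : Fin n → Bool) (b : Bool) : zzPhase t c j (Function.update x k b) = zzPhase t c j x := by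
  rw [zzPhase, Function.update_of_ne hkc.symm, Function.update_of_ne hkj.symm, zzPhase]

theorem copyAmp_update_of_ne {c j k : Fin n} (hkc : k ≠ c) (hkj : k ≠ j) (t : ℂ)
    (x : Fin n → Bool) (b : Bool) : copyAmp t c j (Function.update x k b) = copyAmp t c j x := by
  rw [copyAmp, Function.update_of_ne hkc.symm, Function.update_of_ne hkj.symm, copyAmp]

theorem list_prod_exp_smul_XopF_mulVec {c : Fin n} (t : ℂ) {L : List (Fin n)} (hL : L.Nodup)
    (hcL : c ∉ L) {R : (Fin n → Bool) → ℂ} (hR : ∀ j ∈ L, ∀ x b, R (Function.update x j b) = R x) :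
    (L.map fun j => exp (t • XopF j)).prod *ᵥ (fun x => (L.map fun j => zzPhase t c j x).prod * R x)
      = fun x => (L.map fun j => copyAmp t c j x).prod * R x := by
  induction L generalizing R with
  | nil => simp
  | cons a L ih =>
    obtain ⟨haL, hL⟩ := List.nodup_cons.mp hL
    have hac : a ≠ c := fun h => hcL (h ▸ List.mem_cons_self)
    have hne : ∀ j ∈ L, j ≠ a := fun j hj h => haL (h ▸ hj)
    have hcL' : c ∉ L := fun h => hcL (List.mem_cons_of_mem a h)
    have hRa : ∀ j ∈ L, ∀ x b,
        zzPhase t c a (Function.update x j b) * R (Function.update x j b) = zzPhase t c a x * R x :=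
      fun j hj x b => by
        rw [zzPhase_update_of_ne (ne_of_mem_of_not_mem hj hcL') (hne j hj),
          hR j (List.mem_cons_of_mem a hj)]
    have hcopy : ∀ x b, (L.map fun j => copyAmp t c j (Function.update x a b)).prod
        = (L.map fun j => copyAmp t c j x).prod := fun x b => by
      congr 1
      exact List.map_congr_left fun j hj => copyAmp_update_of_ne hac (hne j hj).symm t x b
    simp only [List.map_cons, List.prod_cons, ← mulVec_mulVec]
    rw [show (fun x => zzPhase t c a x * (L.map fun j => zzPhase t c j x).prod * R x)
        = fun x => (L.map fun j => zzPhase t c j x).prod * (zzPhase t c a x * R x) from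
          funext fun x => by ring, ih hL hcL' hRa,
      show (fun x => (L.map fun j => copyAmp t c j x).prod * (zzPhase t c a x * R x))
        = fun x => zzPhase t c a x * ((L.map fun j => copyAmp t c j x).prod * R x) from
          funext fun x => by ring,
      exp_smul_XopF_mulVec_zzPhase_mul hac t fun x b => by rw [hcopy, hR a List.mem_cons_self]]
    simp only [mul_assoc]

theorem copyAmp_rotAngle (a b : Fin n) (x : Fin n → Bool) :
    copyAmp rotAngle a b x = if x a = x b then 1 - Complex.I else 0 := by
  rw [copyAmp, two_mul_rotAngle, Complex.cosh_mul_I, Complex.sinh_mul_I, ← Complex.ofReal_cos,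
    ← Complex.ofReal_sin, Real.cos_neg, Real.sin_neg, Real.cos_pi_div_two, Real.sin_pi_div_two]
  push_cast
  ring_nf

theorem prod_erase_copyAmp_rotAngle (c : Fin n) (x : Fin n → Bool) :
    ∏ j ∈ Finset.univ.erase c, copyAmp rotAngle c j x =
      if x = (fun _ => false) ∨ x = (fun _ => true) then (1 - Complex.I) ^ (n - 1) else 0 := by
  simp only [copyAmp_rotAngle]
  by_cases hx : ∀ j, x j = x c
  · have hconst : x = (fun _ => false) ∨ x = (fun _ => true) := by
      cases h : x c
      · exact Or.inl (funext fun j => (hx j).trans h)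
      · exact Or.inr (funext fun j => (hx j).trans h)
    rw [if_pos hconst, Finset.prod_congr rfl fun j _ => if_pos (hx j).symm, Finset.prod_const,
      Finset.card_erase_of_mem (Finset.mem_univ c), Finset.card_univ, Fintype.card_fin]
  · obtain ⟨j, hj⟩ := not_forall.mp hx
    have hjc : j ∈ Finset.univ.erase c :=
      Finset.mem_erase.mpr ⟨fun h => hj (h ▸ rfl), Finset.mem_univ j⟩
    rw [Finset.prod_eq_zero hjc (if_neg (Ne.symm hj)), if_neg]
    rintro (rfl | rfl) <;> exact hj rfl

theorem list_prod_exp_smul_ZZopF_center {p : ℕ} (c : Fin (2 * p + 1)) (hc : (c : ℕ) = p)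
    (t : ℂ) :
    ((List.finRange p).map fun i : Fin p =>
        exp (t • ZZopF c ⟨p - (i + 1), by omega⟩) *
          exp (t • ZZopF c ⟨p + (i + 1), by omega⟩)).prod =
      diagonal fun x => ∏ j ∈ Finset.univ.erase c, zzPhase t c j x := by
  simp only [exp_smul_ZZopF, diagonal_mul_diagonal, ← prod_mul_eq_prod_erase_center c hc]
  rw [← Finset.prod_fn, Fin.prod_univ_def, ← diagonalRingHom_apply, map_list_prod, List.map_map]
  rfl

theorem star_circuit_mulVec_plusF (c : Fin n) :
    (((List.finRange n).filter fun j => j ≠ c).map fun j => exp (rotAngle • XopF j)).prod *ᵥ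
        (diagonal (fun x => ∏ j ∈ Finset.univ.erase c, zzPhase rotAngle c j x) *ᵥ plusF n) =
      ((1 - Complex.I) / (Real.sqrt 2 : ℂ)) ^ (n - 1) • ghzF n := by
  set J := (List.finRange n).filter fun j => j ≠ c
  have hJ : J.toFinset = Finset.univ.erase c := by
    ext j
    simp [J]
  have hJnd : J.Nodup := (List.nodup_finRange n).filter _
  have hcJ : c ∉ J := by simp [J]
  have hdiag : diagonal (fun x => ∏ j ∈ Finset.univ.erase c, zzPhase rotAngle c j x) *ᵥ plusF n
      = fun x => (J.map fun j => zzPhase rotAngle c j x).prod * plusF n x := by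
    funext x
    rw [mulVec_diagonal, ← hJ, List.prod_toFinset _ hJnd]
  have hamp : (1 - Complex.I) ^ (n - 1) * ((1 / Real.sqrt (2 ^ n) : ℝ) : ℂ) =
      ((1 - Complex.I) / (Real.sqrt 2 : ℂ)) ^ (n - 1) * ((1 / Real.sqrt 2 : ℝ) : ℂ) := by
    obtain ⟨m, rfl⟩ := Nat.exists_eq_add_one_of_ne_zero (Fin.pos c).ne'
    have h2 : (Real.sqrt 2 : ℂ) ≠ 0 := by exact_mod_cast (by positivity : Real.sqrt 2 ≠ 0)
    rw [sqrt_two_pow, Nat.add_sub_cancel, div_pow]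
    push_cast
    field_simp
    ring
  rw [hdiag, list_prod_exp_smul_XopF_mulVec rotAngle hJnd hcJ fun _ _ _ _ => rfl]
  funext x
  rw [← List.prod_toFinset _ hJnd, hJ, prod_erase_copyAmp_rotAngle, Pi.smul_apply, smul_eq_mul,
    ghzF, plusF]
  split_ifs
  · exact hamp
  · rw [zero_mul, mul_zero]

end Qubits

theorem stmt9 (p n : ℕ) (hn : n = 2 * p + 1)
    (c : Fin n) (hc : (c : ℕ) = p)
    (V : Matrix (Fin n → Bool) (Fin n → Bool) ℂ)
    (hV : V =
      (((List.finRange n).filter (fun j => j ≠ c)).map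
          (fun j => NormedSpace.exp (rotAngle • XopF j))).prod *
      ((List.finRange p).map
          (fun (j : Fin p) =>
            NormedSpace.exp (rotAngle • ZZopF c ⟨p - (j.val + 1), by omega⟩) *
            NormedSpace.exp (rotAngle • ZZopF c ⟨p + (j.val + 1), by
              have hj := j.isLt
              omega⟩))).prod) :
    ∃ ω : ℂ, ‖ω‖ = 1 ∧ V.mulVec (plusF n) = ω • ghzF n := by
  subst hV hn
  rw [← mulVec_mulVec, list_prod_exp_smul_ZZopF_center c hc, star_circuit_mulVec_plusF]
  exact ⟨_, by rw [norm_pow, norm_one_sub_I_div_sqrt_two, one_pow], rfl⟩
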